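/- For every n ≥ 0, the number of {Empty, Blue, Red}-colorings of Fin n with no two adjacent indices receiving the same non-Empty color equals the number of {Empty, Blue, Red}-colorings of Fin n with no two adjacent indices receiving different non-Empty colors. Moreover, for each k, the number of such colorings with exactly k non-Empty vertices agrees between the two families. -/

import Mathlib

inductive Color : Type
  | Empty | Blue | Red
  deriving DecidableEq

instance : Fintype Color :=
  ⟨{Color.Empty, Color.Blue, Color.Red}, fun x => by cases x <;> simp⟩

/-- Col positions on `P_n`: no two adjacent indices get the same non-`Empty` color. -/
def colPathPos (n : ℕ) (c : Fin n → Color) : Prop :=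
  ∀ i j : Fin n, (j : ℕ) = (i : ℕ) + 1 →
    ¬(c i ≠ Color.Empty ∧ c i = c j)

/-- Snort positions on `P_n`: no two adjacent indices get different non-`Empty` colors. -/
def snortPathPos (n : ℕ) (c : Fin n → Color) : Prop :=
  ∀ i j : Fin n, (j : ℕ) = (i : ℕ) + 1 →
    ¬(c i ≠ Color.Empty ∧ c j ≠ Color.Empty ∧ c i ≠ c j)

instance (n : ℕ) : DecidablePred (colPathPos n) := fun _ => by
  unfold colPathPos; infer_instance

instance (n : ℕ) : DecidablePred (snortPathPos n) := fun _ => by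
  unfold snortPathPos; infer_instance

/-!
Swap Blue and Red at every odd-indexed vertex. Since adjacent vertices have opposite parity,
exactly one endpoint of each edge is recolored, and for two non-`Empty` colors `x, y` we have
`x = y ↔ x.swap ≠ y`; so the Col condition on an edge becomes the Snort condition. The map is an
involution preserving the set of non-`Empty` vertices, hence a bijection between the two families
that preserves the number of occupied vertices.
-/

namespace Color

def swap : Color → Color
  | Empty => Empty
  | Blue => Red
  | Red => Blue

lemma swap_involutive : Function.Involutive swap := by
  intro x; cases x <;> rfl

lemma swap_ne_empty_iff {x : Color} : x.swap ≠ Empty ↔ x ≠ Empty := by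
  cases x <;> decide

lemma col_edge_iff_snort_edge_swap_left :
    ∀ x y : Color, ¬(x ≠ Empty ∧ x = y) ↔ ¬(x.swap ≠ Empty ∧ y ≠ Empty ∧ x.swap ≠ y) := by
  decide

lemma col_edge_iff_snort_edge_swap_right :
    ∀ x y : Color, ¬(x ≠ Empty ∧ x = y) ↔ ¬(x ≠ Empty ∧ y.swap ≠ Empty ∧ x ≠ y.swap) := by
  decide

end Color

def swapOdd (n : ℕ) (c : Fin n → Color) : Fin n → Color :=
  fun i => if Even (i : ℕ) then c i else (c i).swap

lemma swapOdd_involutive (n : ℕ) : Function.Involutive (swapOdd n) := by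
  intro c; funext i
  by_cases hi : Even (i : ℕ) <;> simp [swapOdd, hi, Color.swap_involutive _]

lemma swapOdd_ne_empty_iff {n : ℕ} (c : Fin n → Color) (i : Fin n) :
    swapOdd n c i ≠ Color.Empty ↔ c i ≠ Color.Empty := by
  unfold swapOdd; split_ifs
  exacts [Iff.rfl, Color.swap_ne_empty_iff]

lemma card_filter_swapOdd_ne_empty {n : ℕ} (c : Fin n → Color) :
    (Finset.univ.filter fun i => swapOdd n c i ≠ Color.Empty).card =
      (Finset.univ.filter fun i => c i ≠ Color.Empty).card := by
  simp only [swapOdd_ne_empty_iff]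

lemma colPathPos_iff_snortPathPos_swapOdd {n : ℕ} (c : Fin n → Color) :
    colPathPos n c ↔ snortPathPos n (swapOdd n c) := by
  refine forall₂_congr fun i j => forall_congr' fun hij => ?_
  by_cases hi : Even (i : ℕ)
  · have hj : ¬Even (j : ℕ) := by rw [hij]; exact Nat.not_even_iff_odd.mpr hi.add_one
    simpa only [swapOdd, hi, hj, if_true, if_false] using
      Color.col_edge_iff_snort_edge_swap_right (c i) (c j)
  · have hj : Even (j : ℕ) := by rw [hij]; exact (Nat.not_even_iff_odd.mp hi).add_one
    simpa only [swapOdd, hi, hj, if_true, if_false] using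
      Color.col_edge_iff_snort_edge_swap_left (c i) (c j)

theorem colPath_eq_snortPath (n : ℕ) :
    Fintype.card {c : Fin n → Color // colPathPos n c} =
      Fintype.card {c : Fin n → Color // snortPathPos n c} ∧
    ∀ k : ℕ,
      Fintype.card {c : Fin n → Color // colPathPos n c ∧
        (Finset.univ.filter fun i => c i ≠ Color.Empty).card = k} =
      Fintype.card {c : Fin n → Color // snortPathPos n c ∧
        (Finset.univ.filter fun i => c i ≠ Color.Empty).card = k} := by
  let e := (swapOdd_involutive n).toPerm
  refine ⟨Fintype.card_congr (e.subtypeEquiv colPathPos_iff_snortPathPos_swapOdd),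
    fun k => Fintype.card_congr (e.subtypeEquiv fun c => ?_)⟩
  exact and_congr (colPathPos_iff_snortPathPos_swapOdd c)
    (by rw [Function.Involutive.coe_toPerm, card_filter_swapOdd_ne_empty])
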